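/- arXiv:1106.6104 — 2 statements merged into one kernel-verified Lean document; each statement's English description precedes it below -/
import Mathlib

section
/- Consider an $N$-armed bandit ($N \ge 2$) where arm $n$ yields i.i.d. rewards with mean $\theta_n$, all distributions light-tailed and satisfying the Chernoff bound $\Pr(|\overline{\theta}_n(\tau) - \theta_n| \ge \delta) \le 2e^{-a\delta^2 \tau}$ for sample means over $\tau$ observations. Order the means as $\theta_{\sigma(1)} \ge \cdots \ge \theta_{\sigma(N)}$ and set $\Delta_n = \theta_{\sigma(1)} - \theta_{\sigma(n)}$. Suppose at each exploitation time $t$, every arm has been observed at least $w \log t$ times during exploration, with $\delta \le \Delta_2/2$ and $a\delta^2 w > 1$, and the arm with the largest exploration sample mean is played. Then the expected number of exploitation times up to horizon $T$ at which the played arm is not the best arm is at most $2N(1 + \frac{1}{a\delta^2 w - 1})$, uniformly in $T$. -/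
/-!
If every exploration sample mean is within `δ` of its true mean, then `2δ ≤ Δ₂` forces the
empirically best arm to be the best arm. By the union bound and the Chernoff bound with
`τ ≥ w log t`, a mistake at exploitation time `t` thus has probability at most `2N t^(-p)`,
`p = aδ²w > 1`, and comparing the `p`-series with `∫₁^∞ x^(-p) dx` bounds the sum over `t`
by `2N (1 + 1/(p - 1))`.
-/

open MeasureTheory Real Finset

lemma integral_one_rpow_neg_le {p : ℝ} (hp : 1 < p) {b : ℝ} (hb : 1 ≤ b) :
    ∫ x in (1 : ℝ)..b, x ^ (-p) ≤ 1 / (p - 1) := by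
  have hzero : (0 : ℝ) ∉ Set.uIcc 1 b := by
    rw [Set.uIcc_of_le hb]
    exact fun h => absurd h.1 (by norm_num)
  rw [integral_rpow (Or.inr ⟨by linarith, hzero⟩), one_rpow,
    show -p + 1 = -(p - 1) by ring, div_neg, ← neg_div, neg_sub]
  gcongr
  linarith [rpow_nonneg (zero_le_one.trans hb) (-(p - 1))]

-- The `t = 0` term is `0 ^ (-p) = 0`, by Mathlib's convention for `rpow`.
lemma sum_range_rpow_neg_le {p : ℝ} (hp : 1 < p) (n : ℕ) :
    ∑ t ∈ range n, (t : ℝ) ^ (-p) ≤ 1 + 1 / (p - 1) := by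
  have hanti : AntitoneOn (fun x : ℝ => x ^ (-p)) (Set.Icc 1 (1 + n)) :=
    fun x hx y _ hxy => rpow_le_rpow_of_nonpos (by linarith [hx.1]) hxy (by linarith)
  have htail : ∑ i ∈ range n, ((1 : ℝ) + (i + 1 : ℕ)) ^ (-p) ≤ 1 / (p - 1) :=
    (hanti.sum_le_integral).trans (integral_one_rpow_neg_le hp (by simp))
  calc ∑ t ∈ range n, (t : ℝ) ^ (-p)
      ≤ ∑ t ∈ range (n + 2), (t : ℝ) ^ (-p) :=
        sum_le_sum_of_subset_of_nonneg (range_subset_range.2 (by omega))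
          fun t _ _ => rpow_nonneg t.cast_nonneg _
    _ = (0 : ℝ) ^ (-p) + (1 : ℝ) ^ (-p) + ∑ i ∈ range n, ((1 : ℝ) + (i + 1 : ℕ)) ^ (-p) := by
        rw [sum_range_succ', sum_range_succ']
        push_cast
        ring_nf
    _ ≤ 1 + 1 / (p - 1) := by
        rw [zero_rpow (by linarith), one_rpow]
        linarith

lemma eq_of_le_of_abs_sub_lt {ι : Type*} {θ θbar : ι → ℝ} {best i : ι} {Δ δ : ℝ}
    (hgap : ∀ n, n ≠ best → Δ ≤ θ best - θ n) (hδ : δ ≤ Δ / 2)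
    (hmax : θbar best ≤ θbar i) (hclose : ∀ n, |θbar n - θ n| < δ) : i = best := by
  by_contra hi
  have hbest := (abs_lt.1 (hclose best)).1
  have hi' := (abs_lt.1 (hclose i)).2
  linarith [hgap i hi]

lemma measure_argmax_ne_le {Ω ι : Type*} [MeasurableSpace Ω] [Fintype ι] (μ : Measure Ω)
    {θ : ι → ℝ} {θbar : ι → Ω → ℝ} {played : Ω → ι} {best : ι} {Δ δ ε : ℝ}
    (hgap : ∀ n, n ≠ best → Δ ≤ θ best - θ n) (hδ : δ ≤ Δ / 2)
    (hplay : ∀ ω n, θbar n ω ≤ θbar (played ω) ω)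
    (hdev : ∀ n, μ {ω | δ ≤ |θbar n ω - θ n|} ≤ ENNReal.ofReal ε) :
    μ {ω | played ω ≠ best} ≤ ENNReal.ofReal (Fintype.card ι * ε) := by
  have hsub : {ω | played ω ≠ best} ⊆ ⋃ n, {ω | δ ≤ |θbar n ω - θ n|} := by
    intro ω hω
    by_contra hfar
    simp only [Set.mem_iUnion, Set.mem_ofPred_eq, not_exists, not_le] at hfar
    exact hω (eq_of_le_of_abs_sub_lt hgap hδ (hplay ω best) hfar)
  calc μ {ω | played ω ≠ best}
      ≤ ∑ n, μ {ω | δ ≤ |θbar n ω - θ n|} :=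
        (measure_mono hsub).trans (measure_iUnion_fintype_le _ _)
    _ ≤ ∑ _n : ι, ENNReal.ofReal ε := sum_le_sum fun n _ => hdev n
    _ = ENNReal.ofReal (Fintype.card ι * ε) := by
        rw [sum_const, card_univ, nsmul_eq_mul, ENNReal.ofReal_mul (Nat.cast_nonneg _),
          ENNReal.ofReal_natCast]

lemma exp_neg_mul_le_rpow_neg {c w τ t : ℝ} (hc : 0 ≤ c) (ht : 0 < t) (hτ : w * log t ≤ τ) :
    exp (-(c * τ)) ≤ t ^ (-(c * w)) := by
  rw [rpow_def_of_pos ht, exp_le_exp]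
  nlinarith [mul_le_mul_of_nonneg_left hτ hc]

theorem dsee_exploitation_error_bound_general {Ω : Type*} [MeasurableSpace Ω]
    (ℙ : Measure Ω) [IsProbabilityMeasure ℙ]
    (N : ℕ) (θ : Fin N → ℝ)
    (θbar : Fin N → ℕ → Ω → ℝ)
    (E : Set ℕ) [DecidablePred (· ∈ E)] (hE : ∀ t ∈ E, 1 ≤ t)
    (played : ℕ → Ω → Fin N) (best : Fin N)
    (Δ₂ : ℝ) (hΔ₂ : ∀ n, n ≠ best → Δ₂ ≤ θ best - θ n)
    (a δ w : ℝ) (ha : 0 < a) (hδ : δ ≤ Δ₂ / 2) (hw : 1 < a * δ ^ 2 * w)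
    (τ : Fin N → ℕ → ℕ)
    (hτ : ∀ n t, t ∈ E → w * Real.log t ≤ τ n t)
    (hdev : ∀ n t, t ∈ E →
      ℙ {ω | δ ≤ |θbar n t ω - θ n|} ≤ ENNReal.ofReal (2 * exp (-(a * δ ^ 2 * τ n t))))
    (hplay : ∀ t ∈ E, ∀ ω, ∀ n, θbar n t ω ≤ θbar (played t ω) t ω)
    (T : ℕ) :
    ∑ t ∈ (Finset.range (T + 1)).filter (· ∈ E), ℙ {ω | played t ω ≠ best} ≤
      ENNReal.ofReal (2 * N * (1 + 1 / (a * δ ^ 2 * w - 1))) := by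
  set p := a * δ ^ 2 * w
  have hstep : ∀ t ∈ E, ℙ {ω | played t ω ≠ best} ≤ ENNReal.ofReal (2 * N * (t : ℝ) ^ (-p)) := by
    intro t htE
    have ht : (0 : ℝ) < t := by exact_mod_cast hE t htE
    have hexp n := exp_neg_mul_le_rpow_neg (c := a * δ ^ 2) (by positivity) ht (hτ n t htE)
    have := measure_argmax_ne_le ℙ (ε := 2 * (t : ℝ) ^ (-p)) hΔ₂ hδ (hplay t htE)
      fun n => (hdev n t htE).trans (ENNReal.ofReal_le_ofReal (by linarith [hexp n]))
    rwa [Fintype.card_fin, ← mul_assoc, mul_comm (N : ℝ)] at this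
  calc ∑ t ∈ (range (T + 1)).filter (· ∈ E), ℙ {ω | played t ω ≠ best}
      ≤ ∑ t ∈ (range (T + 1)).filter (· ∈ E), ENNReal.ofReal (2 * N * (t : ℝ) ^ (-p)) :=
        sum_le_sum fun t ht => hstep t (mem_filter.1 ht).2
    _ ≤ ∑ t ∈ range (T + 1), ENNReal.ofReal (2 * N * (t : ℝ) ^ (-p)) :=
        sum_le_sum_of_subset (filter_subset _ _)
    _ = ENNReal.ofReal (2 * N * ∑ t ∈ range (T + 1), (t : ℝ) ^ (-p)) := by
        rw [mul_sum, ENNReal.ofReal_sum_of_nonneg fun t _ => by positivity]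
    _ ≤ ENNReal.ofReal (2 * N * (1 + 1 / (p - 1))) :=
        ENNReal.ofReal_le_ofReal (by gcongr; exact sum_range_rpow_neg_le hw _)

/-- DSEE exploitation error bound: if at every exploitation time `t` each arm's
exploration sample mean has been computed from at least `w log t` observations and
satisfies the Chernoff bound `Pr(|θ̄ₙ(τ) - θₙ| ≥ δ) ≤ 2 exp(-aδ²τ)`, with
`δ ≤ Δ₂/2` and `aδ²w > 1`, and the arm with the largest sample mean is played, then the
expected number of exploitation times up to `T` at which the played arm is not the best
arm is at most `2N(1 + 1/(aδ²w - 1))`, uniformly in `T`. -/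
theorem dsee_exploitation_error_bound {Ω : Type*} [MeasurableSpace Ω]
    (ℙ : Measure Ω) [IsProbabilityMeasure ℙ]
    (N : ℕ) (hN : 2 ≤ N) (θ : Fin N → ℝ)
    (θbar : Fin N → ℕ → Ω → ℝ)
    (E : Set ℕ) [DecidablePred (· ∈ E)] (hE : ∀ t ∈ E, 1 ≤ t)
    (played : ℕ → Ω → Fin N) (best : Fin N)
    (hbest : ∀ n, θ n ≤ θ best)
    (Δ₂ : ℝ) (hΔ₂pos : 0 < Δ₂) (hΔ₂ : ∀ n, n ≠ best → Δ₂ ≤ θ best - θ n)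
    (a δ w : ℝ) (ha : 0 < a) (hδ0 : 0 < δ) (hδ : δ ≤ Δ₂ / 2) (hw : 1 < a * δ ^ 2 * w)
    (τ : Fin N → ℕ → ℕ)
    (hτ : ∀ n t, t ∈ E → w * Real.log t ≤ τ n t)
    (hdev : ∀ n t, t ∈ E →
      ℙ {ω | δ ≤ |θbar n t ω - θ n|} ≤ ENNReal.ofReal (2 * exp (-(a * δ ^ 2 * τ n t))))
    (hplay : ∀ t ∈ E, ∀ ω, ∀ n, θbar n t ω ≤ θbar (played t ω) t ω)
    (T : ℕ) :
    ∑ t ∈ (Finset.range (T + 1)).filter (· ∈ E), ℙ {ω | played t ω ≠ best} ≤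
      ENNReal.ofReal (2 * N * (1 + 1 / (a * δ ^ 2 * w - 1))) :=
  dsee_exploitation_error_bound_general ℙ N θ θbar E hE played best Δ₂ hΔ₂ a δ w ha hδ hw τ hτ hdev
    hplay T
end

section
/- Assume the reward distributions of all $N$ arms have finite $p$th moment with $1 < p \le 2$, and that the sample-mean deviation bound $\Pr(|\overline{\theta}_n(\tau)-\theta_n| \ge \delta) \le C_p \delta^{-p} \tau^{1-p}$ holds with $C_p = (3\sqrt{2})^p p^{p/2}\mathbb{E}[|X(1)-\theta|^p]$. Under the DSEE policy whose exploration sequence includes time $t$ whenever $|\mathcal{A}(t-1)| < v t^{1/p}$ for a constant $v > 0$, the regret satisfies $R_T^{\pi^p}(\mathcal{F}) = O(T^{1/p})$. -/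
/-!
Split the regret into exploration and exploitation times. At most `v T^(1/p) + 1` of the first
`T` times explore, each costing at most the largest gap. At an exploitation time `t` the
exploration rule forces `|A(t-1)| ≥ v t^(1/p)`, so round robin has sampled every arm at least
`v t^(1/p) / (2N)` times. A suboptimal arm can only have the largest sample mean if some sample
mean is `δ`-off, which by the deviation bound and a union bound has probability
`O((t^(1/p))^(1-p)) = O(t^(1/p - 1))`. Summing, `∑_{t ≤ T} t^(1/p - 1) ≤ p T^(1/p)`.
-/

open MeasureTheory Real Finset

theorem Nat.div_le_card_filter_mod_eq {N n : ℕ} (hn : n < N) (c : ℕ) :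
    c / N ≤ #{j ∈ range c | j % N = n} := by
  have hcount := Nat.count_modEq_card c (hn.trans_le' (Nat.zero_le n)) n
  rw [Nat.count_eq_card_filter_range] at hcount
  simp only [Nat.ModEq, Nat.mod_eq_of_lt hn] at hcount
  omega

theorem Nat.le_two_mul_mul_of_div_le {N c τ : ℕ} (hN : 0 < N) (hc : c / N ≤ τ) (hτ : 0 < τ) :
    c ≤ 2 * N * τ := by
  have hlt := Nat.lt_mul_div_succ c hN
  nlinarith

namespace Real

theorem mul_add_one_rpow_sub_one_le {α : ℝ} (hα0 : 0 ≤ α) (hα1 : α ≤ 1) {x : ℝ} (hx : 0 ≤ x) :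
    α * (x + 1) ^ (α - 1) ≤ (x + 1) ^ α - x ^ α := by
  have hx1 : 0 < x + 1 := by linarith
  -- Bernoulli's inequality `(1 + s)^α ≤ 1 + α s` at `s = -1 / (x + 1)`
  have hbern := rpow_one_add_le_one_add_mul_self (s := -1 / (x + 1))
    (by rw [neg_div, neg_le_neg_iff, div_le_one hx1]; linarith) hα0 hα1
  have hbase : 1 + -1 / (x + 1) = x / (x + 1) := by field_simp; ring
  rw [hbase, div_rpow hx hx1.le, div_le_iff₀ (rpow_pos_of_pos hx1 α)] at hbern
  rw [rpow_sub_one hx1.ne']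
  have : (1 + α * (-1 / (x + 1))) * (x + 1) ^ α = (x + 1) ^ α - α * ((x + 1) ^ α / (x + 1)) := by
    field_simp; ring
  linarith

theorem sum_Icc_rpow_sub_one_le {α : ℝ} (hα0 : 0 < α) (hα1 : α ≤ 1) (T : ℕ) :
    ∑ t ∈ Icc 1 T, (t : ℝ) ^ (α - 1) ≤ (T : ℝ) ^ α / α := by
  induction T with
  | zero => simp [zero_rpow hα0.ne']
  | succ T ih =>
    rw [sum_Icc_succ_top (by omega), le_div_iff₀ hα0]
    rw [le_div_iff₀ hα0] at ih
    have := mul_add_one_rpow_sub_one_le hα0.le hα1 T.cast_nonneg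
    push_cast
    linarith

theorem rpow_one_sub_le_of_div_le {N c τ : ℕ} {a p : ℝ} (hN : 0 < N) (hp : 1 < p) (ha : 0 < a)
    (hac : a ≤ c) (hτ : c / N ≤ τ) : (τ : ℝ) ^ (1 - p) ≤ (a / (2 * N)) ^ (1 - p) := by
  rcases Nat.eq_zero_or_pos τ with rfl | hτ0
  · -- the junk value `0 ^ (1 - p) = 0`
    rw [Nat.cast_zero, zero_rpow (sub_ne_zero.2 hp.ne)]
    positivity
  · have hc : (c : ℝ) ≤ 2 * N * τ := by exact_mod_cast Nat.le_two_mul_mul_of_div_le hN hτ hτ0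
    refine rpow_le_rpow_of_nonpos (by positivity) ?_ (by linarith)
    rw [div_le_iff₀ (by positivity)]
    linarith

end Real

/-- The paper's `|A(t)|`. -/
def explorationCount (A : Set ℕ) [DecidablePred (· ∈ A)] (t : ℕ) : ℕ :=
  #{s ∈ Icc 1 t | s ∈ A}

section explorationCount

variable {A : Set ℕ} [DecidablePred (· ∈ A)]

theorem explorationCount_zero : explorationCount A 0 = 0 := rfl

theorem explorationCount_succ (t : ℕ) :
    explorationCount A (t + 1) = explorationCount A t + if t + 1 ∈ A then 1 else 0 := by
  rw [explorationCount, explorationCount, ← insert_Icc_right_eq_Icc_add_one (by omega),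
    filter_insert]
  split_ifs
  · exact card_insert_of_notMem (by simp)
  · rfl

theorem explorationCount_mono : Monotone (explorationCount A) := fun _ _ h =>
  card_le_card (filter_subset_filter _ (Icc_subset_Icc_right h))

theorem explorationCount_strictMonoOn : StrictMonoOn (explorationCount A) A := by
  rintro s - s' hs' h
  obtain ⟨t, rfl⟩ := Nat.exists_eq_add_of_lt h
  rw [explorationCount_succ, if_pos hs']
  exact Nat.lt_succ_of_le (explorationCount_mono (by omega))

theorem one_le_explorationCount {s : ℕ} (hs : s ∈ A) (h1 : 1 ≤ s) : 1 ≤ explorationCount A s :=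
  card_pos.2 ⟨s, by simp [hs, h1]⟩

theorem explorationCount_le_add_one {g : ℕ → ℝ} (hg : Monotone g) (hg0 : 0 ≤ g 0)
    (hA : ∀ t ∈ A, 1 ≤ t → (explorationCount A (t - 1) : ℝ) < g t) (T : ℕ) :
    (explorationCount A T : ℝ) ≤ g T + 1 := by
  induction T with
  | zero => simp only [explorationCount_zero, Nat.cast_zero]; linarith
  | succ T ih =>
    rw [explorationCount_succ]
    split_ifs with hT
    · simpa using (hA (T + 1) hT (by omega)).le
    · simpa using ih.trans (by linarith [hg T.le_succ])

/-- Round robin: the `k`-th exploration time (`k = 1, 2, …`) samples the arm `(k - 1) % N`. -/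
theorem div_le_card_filter_explorationCount_mod {N n : ℕ} (hn : n < N) (T : ℕ) :
    explorationCount A T / N ≤ #{s ∈ Icc 1 T | s ∈ A ∧ (explorationCount A s - 1) % N = n} := by
  set E := {s ∈ Icc 1 T | s ∈ A}
  have hpos : ∀ s ∈ E, 1 ≤ explorationCount A s := fun s hs => by
    simp only [E, mem_filter, mem_Icc] at hs
    exact one_le_explorationCount hs.2 hs.1.1
  have hinj : Set.InjOn (fun s => explorationCount A s - 1) E := fun s hs s' hs' h => by
    have := hpos s hs
    have := hpos s' hs'
    exact explorationCount_strictMonoOn.injOn (mem_filter.1 hs).2 (mem_filter.1 hs').2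
      (by simp only at h; omega)
  have himage : E.image (fun s => explorationCount A s - 1) = range (explorationCount A T) := by
    refine eq_of_subset_of_card_le (fun j hj => ?_) ?_
    · obtain ⟨s, hs, rfl⟩ := mem_image.1 hj
      have := hpos s hs
      have := explorationCount_mono (A := A) (mem_Icc.1 (mem_filter.1 hs).1).2
      simp only [mem_range]
      omega
    · rw [card_image_of_injOn hinj, card_range]
      exact le_rfl
  calc explorationCount A T / N ≤ #{j ∈ range (explorationCount A T) | j % N = n} :=
        Nat.div_le_card_filter_mod_eq hn _
    _ = #{s ∈ E | (explorationCount A s - 1) % N = n} := by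
        rw [← himage, filter_image, card_image_of_injOn (hinj.mono (filter_subset _ _))]
    _ = _ := by rw [filter_filter]

theorem card_filter_explorationCount_mod_rpow_le {N n : ℕ} (hn : n < N) {v p : ℝ} (hv : 0 < v)
    (hp : 1 < p) {t : ℕ} (ht : 0 < t)
    (hexplored : v * t ^ (1 / p) ≤ explorationCount A (t - 1)) :
    (#{s ∈ Icc 1 (t - 1) | s ∈ A ∧ (explorationCount A s - 1) % N = n} : ℝ) ^ (1 - p) ≤
      (v / (2 * N)) ^ (1 - p) * t ^ (1 / p - 1) := by
  calc _ ≤ (v * t ^ (1 / p) / (2 * N)) ^ (1 - p) :=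
        rpow_one_sub_le_of_div_le (by omega) hp (by positivity) hexplored
          (div_le_card_filter_explorationCount_mod hn (t - 1))
    _ = _ := by
        rw [mul_div_right_comm, mul_rpow (by positivity) (by positivity),
          ← rpow_mul (by positivity)]
        congr 2
        field_simp

theorem sum_Icc_le_rpow_of_explore_exploit {α v B D : ℝ} {r : ℕ → ℝ} (hα0 : 0 < α)
    (hα1 : α ≤ 1) (hv : 0 ≤ v) (hB : 0 ≤ B) (hD : 0 ≤ D)
    (hA : ∀ t ∈ A, 1 ≤ t → (explorationCount A (t - 1) : ℝ) < v * t ^ α)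
    (hexplore : ∀ t ∈ A, r t ≤ B) (hexploit : ∀ t, 1 ≤ t → t ∉ A → r t ≤ D * t ^ (α - 1))
    {T : ℕ} (hT : 1 ≤ T) :
    ∑ t ∈ Icc 1 T, r t ≤ (B * (v + 1) + D / α) * T ^ α := by
  have hTα : 1 ≤ (T : ℝ) ^ α := one_le_rpow (by exact_mod_cast hT) hα0.le
  have hcount := explorationCount_le_add_one (g := fun t : ℕ => v * (t : ℝ) ^ α)
    (fun s t hst => by dsimp only; gcongr) (by simp [zero_rpow hα0.ne']) hA T
  have hexplored : ∑ t ∈ Icc 1 T with t ∈ A, r t ≤ B * explorationCount A T := by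
    calc _ ≤ ∑ t ∈ Icc 1 T with t ∈ A, B := sum_le_sum fun t ht => hexplore t (mem_filter.1 ht).2
      _ = _ := by rw [sum_const, nsmul_eq_mul, mul_comm]; rfl
  have hexploited : ∑ t ∈ Icc 1 T with t ∉ A, r t ≤ D * (T ^ α / α) := by
    calc _ ≤ ∑ t ∈ Icc 1 T with t ∉ A, D * (t : ℝ) ^ (α - 1) := sum_le_sum fun t ht => by
          simp only [mem_filter, mem_Icc] at ht
          exact hexploit t ht.1.1 ht.2
      _ ≤ ∑ t ∈ Icc 1 T, D * (t : ℝ) ^ (α - 1) :=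
          sum_le_sum_of_subset_of_nonneg (filter_subset _ _) fun t _ _ => by positivity
      _ ≤ _ := by
          rw [← mul_sum]
          exact mul_le_mul_of_nonneg_left (sum_Icc_rpow_sub_one_le hα0 hα1 T) hD
  rw [← sum_filter_add_sum_filter_not _ (· ∈ A)]
  have : D * (T ^ α / α) = D / α * T ^ α := by ring
  linarith [mul_le_mul_of_nonneg_left hcount hB, mul_le_mul_of_nonneg_left hTα hB]

end explorationCount

section SortedArms

variable {N : ℕ} {β : Type*} [Preorder β] {θ : Fin N → β} {σ : Equiv.Perm (Fin N)}

theorem le_apply_perm_zero (hσ : Antitone (θ ∘ σ)) (hN : 0 < N) (m : Fin N) :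
    θ m ≤ θ (σ ⟨0, hN⟩) := by
  simpa using hσ (a := ⟨0, hN⟩) (b := σ.symm m) (Fin.mk_le_mk.2 (Nat.zero_le _))

theorem le_apply_perm_one_of_lt_apply_perm_zero (hσ : Antitone (θ ∘ σ)) (hN : 1 < N)
    {m : Fin N} (hm : θ m < θ (σ ⟨0, by omega⟩)) : θ m ≤ θ (σ ⟨1, hN⟩) := by
  have hne : (σ.symm m : ℕ) ≠ 0 := by
    intro h
    rw [← show σ.symm m = ⟨0, by omega⟩ from Fin.ext h, Equiv.apply_symm_apply] at hm
    exact lt_irrefl _ hm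
  simpa using hσ (a := ⟨1, hN⟩) (b := σ.symm m) (Fin.le_iff_val_le_val.2 (by dsimp only; omega))

end SortedArms

section Regret

variable {Ω ι : Type*} [MeasurableSpace Ω] {μ : Measure Ω}

theorem sub_integral_le_mul_measureReal [MeasurableSpace ι] [DiscreteMeasurableSpace ι]
    [IsProbabilityMeasure μ] {X : Ω → ι} (hX : Measurable X) {θ : ι → ℝ} {θstar B : ℝ}
    (hle : ∀ m, θ m ≤ θstar) (hB : ∀ m, θstar - θ m ≤ B) :
    θstar - ∫ ω, θ (X ω) ∂μ ≤ B * μ.real {ω | θ (X ω) < θstar} := by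
  have hS : MeasurableSet {ω | θ (X ω) < θstar} := hX (.of_discrete (s := {m | θ m < θstar}))
  have hint : Integrable (fun ω => θ (X ω)) μ := by
    refine Integrable.of_bound (Measurable.of_discrete.comp hX).aestronglyMeasurable
      (|θstar| + |B|) (ae_of_all _ fun ω => ?_)
    have := hle (X ω)
    have := hB (X ω)
    rw [norm_eq_abs, abs_le]
    constructor <;> linarith [neg_abs_le θstar, le_abs_self θstar, le_abs_self B, abs_nonneg B]
  have hpt : ∀ ω, θstar - θ (X ω) ≤ {ω | θ (X ω) < θstar}.indicator (fun _ => B) ω := by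
    intro ω
    by_cases hω : θ (X ω) < θstar
    · simpa [hω] using hB (X ω)
    · simp [le_antisymm (hle (X ω)) (not_lt.1 hω)]
  have := integral_mono (f := fun ω => θstar - θ (X ω)) ((integrable_const θstar).sub hint)
    ((integrable_const B).indicator hS) hpt
  rwa [integral_sub (integrable_const θstar) hint, integral_const, integral_indicator_const B hS,
    probReal_univ, one_smul, smul_eq_mul, mul_comm] at this

theorem measureReal_lt_le_sum_measureReal_deviation [Fintype ι] [IsFiniteMeasure μ]
    {X : Ω → ι} {θ : ι → ℝ} {θhat : ι → Ω → ℝ} {i : ι} {δ : ℝ}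
    (hgap : ∀ m, θ m < θ i → 2 * δ ≤ θ i - θ m) (hX : ∀ ω, θhat i ω ≤ θhat (X ω) ω) :
    μ.real {ω | θ (X ω) < θ i} ≤ ∑ n, μ.real {ω | δ ≤ |θhat n ω - θ n|} := by
  have hsub : {ω | θ (X ω) < θ i} ⊆ ⋃ n, {ω | δ ≤ |θhat n ω - θ n|} := by
    intro ω hω
    simp only [Set.mem_iUnion, Set.mem_ofPred_eq] at hω ⊢
    by_contra! hdev
    have h1 := abs_lt.1 (hdev (X ω))
    have h2 := abs_lt.1 (hdev i)
    linarith [hgap _ hω, hX ω]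
  exact (measureReal_mono hsub).trans (measureReal_iUnion_fintype_le _)

theorem sub_integral_le_mul_sum_of_measure_deviation_le [MeasurableSpace ι]
    [DiscreteMeasurableSpace ι] [Fintype ι] [IsProbabilityMeasure μ] {X : Ω → ι}
    (hX : Measurable X) {θ b : ι → ℝ} {θhat : ι → Ω → ℝ} {i : ι} {δ B : ℝ}
    (hle : ∀ m, θ m ≤ θ i) (hgap : ∀ m, θ m < θ i → 2 * δ ≤ θ i - θ m)
    (hB : ∀ m, θ i - θ m ≤ B) (hXmax : ∀ ω, θhat i ω ≤ θhat (X ω) ω) (hb : ∀ n, 0 ≤ b n)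
    (hdev : ∀ n, μ {ω | δ ≤ |θhat n ω - θ n|} ≤ ENNReal.ofReal (b n)) :
    θ i - ∫ ω, θ (X ω) ∂μ ≤ B * ∑ n, b n :=
  (sub_integral_le_mul_measureReal hX hle hB).trans <| mul_le_mul_of_nonneg_left
    ((measureReal_lt_le_sum_measureReal_deviation hgap hXmax).trans
      (sum_le_sum fun n _ => ENNReal.toReal_le_of_le_ofReal (hb n) (hdev n)))
    ((sub_self (θ i)).ge.trans (hB i))

end Regret

/-- DSEE sublinear regret for heavy-tailed rewards, `1 < p ≤ 2` (Theorem 3, first case):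
with exploration sequence `t ∈ A ↔ |A(t-1)| < v t^(1/p)`, round-robin exploration,
largest-sample-mean exploitation, and the sample-mean deviation bound
`Pr(|θ̄ₙ(τ) - θₙ| ≥ δ) ≤ Cₚ(n) δ^(-p) τ^(1-p)` with
`Cₚ(n) = (3√2)^p p^(p/2) E[|Xₙ - θₙ|^p]`, the regret satisfies `R_T = O(T^(1/p))`. -/
theorem dsee_regret_heavy_tailed_le_two {Ω : Type*} [MeasurableSpace Ω]
    (ℙ : Measure Ω) [IsProbabilityMeasure ℙ]
    (N : ℕ) (hN : 2 ≤ N) (θ : Fin N → ℝ)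
    (σ : Equiv.Perm (Fin N)) (hσ : ∀ i j : Fin N, i ≤ j → θ (σ j) ≤ θ (σ i))
    (Δ : Fin N → ℝ) (hΔ : ∀ n, Δ n = θ (σ ⟨0, by omega⟩) - θ (σ n))
    (hΔ₂ : 0 < Δ ⟨1, by omega⟩)
    (p : ℝ) (hp1 : 1 < p)
    -- p-th central moments of the reward distributions and the deviation constant
    (mom : Fin N → ℝ) (hmom : ∀ n, 0 ≤ mom n)
    (Cp : Fin N → ℝ)
    (hCp : ∀ n, Cp n = (3 * Real.sqrt 2) ^ p * p ^ (p / 2) * mom n)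
    (δ : ℝ) (hδ : δ = Δ ⟨1, by omega⟩ / 2)
    (v : ℝ) (hv : 0 < v)
    (A : Set ℕ) [DecidablePred (· ∈ A)]
    (cnt : ℕ → ℕ) (hcnt : ∀ t, cnt t = ((Finset.Icc 1 t).filter (· ∈ A)).card)
    (hA : ∀ t : ℕ, 1 ≤ t → (t ∈ A ↔ (cnt (t - 1) : ℝ) < v * (t : ℝ) ^ ((1 : ℝ) / p)))
    (pol : ℕ → Ω → Fin N) (hpolmeas : ∀ t, Measurable (pol t))
    (τ : Fin N → ℕ → ℕ)
    (hτ : ∀ n t, τ n t = ((Finset.Icc 1 (t - 1)).filter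
      (fun s => s ∈ A ∧ (cnt s - 1) % N = (n : ℕ))).card)
    (θbar : Fin N → ℕ → Ω → ℝ)
    (hdev : ∀ n t, 1 ≤ t → t ∉ A →
      ℙ {ω | δ ≤ |θbar n t ω - θ n|} ≤
        ENNReal.ofReal (Cp n / δ ^ p * (τ n t : ℝ) ^ (1 - p)))
    (hexploit : ∀ t, 1 ≤ t → t ∉ A → ∀ ω, ∀ n, θbar n t ω ≤ θbar (pol t ω) t ω)
    (R : ℕ → ℝ)
    (hR : ∀ T, R T = T * θ (σ ⟨0, by omega⟩)
      - ∑ t ∈ Finset.Icc 1 T, ∫ ω, θ (pol t ω) ∂ℙ) :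
    ∃ C : ℝ, 0 < C ∧ ∀ T : ℕ, 1 ≤ T → R T ≤ C * (T : ℝ) ^ ((1 : ℝ) / p) := by
  obtain rfl : cnt = explorationCount A := funext hcnt
  have hσ' : Antitone (θ ∘ σ) := fun i j h => hσ i j h
  set θstar := θ (σ ⟨0, by omega⟩)
  have hδ0 : 0 < δ := by rw [hδ]; linarith
  have hbest : ∀ m, θ m ≤ θstar := le_apply_perm_zero hσ' _
  have hgap : ∀ m, θ m < θstar → 2 * δ ≤ θstar - θ m := fun m hm => by
    linarith [le_apply_perm_one_of_lt_apply_perm_zero hσ' hN hm, hΔ ⟨1, by omega⟩]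
  obtain ⟨B, hB⟩ := Finite.exists_le fun m => θstar - θ m
  have hB0 : 0 ≤ B := (sub_self θstar).ge.trans (hB _)
  have hc : ∀ n, 0 ≤ Cp n / δ ^ p := fun n => by rw [hCp]; have := hmom n; positivity
  set K := (v / (2 * N)) ^ (1 - p)
  have hexploitRegret : ∀ t, 1 ≤ t → t ∉ A →
      θstar - ∫ ω, θ (pol t ω) ∂ℙ ≤ (B * ∑ n, Cp n / δ ^ p * K) * t ^ (1 / p - 1) := by
    intro t ht htA
    have hexplored := not_lt.1 fun h => htA ((hA t ht).2 h)
    calc θstar - ∫ ω, θ (pol t ω) ∂ℙ ≤ B * ∑ n, Cp n / δ ^ p * (τ n t : ℝ) ^ (1 - p) :=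
          sub_integral_le_mul_sum_of_measure_deviation_le (θhat := fun n ω => θbar n t ω)
            (hpolmeas t) hbest hgap hB (fun ω => hexploit t ht htA ω _)
            (fun n => by have := hc n; positivity) (fun n => hdev n t ht htA)
      _ ≤ B * ∑ n, Cp n / δ ^ p * (K * t ^ (1 / p - 1)) := by
          gcongr with n
          · exact hc n
          · exact hτ n t ▸ card_filter_explorationCount_mod_rpow_le n.isLt hv hp1 ht hexplored
      _ = _ := by rw [← sum_mul, ← sum_mul]; ring
  have hD0 : 0 ≤ B * ∑ n, Cp n / δ ^ p * K :=
    mul_nonneg hB0 (sum_nonneg fun n _ => mul_nonneg (hc n) (by positivity))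
  refine ⟨B * (v + 1) + (B * ∑ n, Cp n / δ ^ p * K) / (1 / p) + 1, by positivity, fun T hT => ?_⟩
  have hregret : R T = ∑ t ∈ Icc 1 T, (θstar - ∫ ω, θ (pol t ω) ∂ℙ) := by
    rw [hR, sum_sub_distrib, sum_const, Nat.card_Icc, nsmul_eq_mul, Nat.add_sub_cancel]
  have hsum := sum_Icc_le_rpow_of_explore_exploit (by positivity)
    (div_le_one_of_le₀ hp1.le (by linarith)) hv.le hB0 hD0 (fun t ht ht1 => (hA t ht1).1 ht)
    (fun t _ => (sub_integral_le_mul_measureReal (hpolmeas t) hbest hB).trans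
      (mul_le_of_le_one_right hB0 measureReal_le_one)) hexploitRegret hT
  rw [hregret]
  linarith [rpow_nonneg T.cast_nonneg (1 / p)]
end
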